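/- Let (L, R, Δ) be a natural weak factorisation system on C, with (f, s) : X → Y and (g, t) : Y → Z L-coalgebras and (gf, u) their composite coalgebra (u = π_{gf} ∘ E(E(1, g), 1) ∘ E(s, 1) ∘ t). Then the square (1_X, g) : f → gf is a morphism of L-coalgebras (f, s) → (gf, u), i.e. u ∘ g = E(1_X, g) ∘ s. -/

import Mathlib

open CategoryTheory CategoryTheory.Limits

universe v u

/-- A natural weak factorisation system on `C`, in reduced form: a functorial factorisation
`(E, λ, ρ)` together with natural families `σ_f : Ef ⟶ ELf` and `π_f : ERf ⟶ Ef`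
satisfying the equations (nwfs1) and the distributivity equation (nwfs2). -/
structure ReducedNWFS (C : Type u) [Category.{v} C] where
  E : Arrow C ⥤ C
  l : (Arrow.leftFunc : Arrow C ⥤ C) ⟶ E
  r : E ⟶ (Arrow.rightFunc : Arrow C ⥤ C)
  fact : ∀ f : Arrow C, l.app f ≫ r.app f = f.hom
  σ : ∀ f : Arrow C, E.obj f ⟶ E.obj (Arrow.mk (l.app f))
  π : ∀ f : Arrow C, E.obj (Arrow.mk (r.app f)) ⟶ E.obj f
  σ_l : ∀ f : Arrow C, l.app f ≫ σ f = l.app (Arrow.mk (l.app f))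
  π_r : ∀ f : Arrow C, π f ≫ r.app f = r.app (Arrow.mk (r.app f))
  σ_natural : ∀ {f g : Arrow C} (sq : f ⟶ g),
    E.map sq ≫ σ g =
      σ f ≫ E.map (Arrow.homMk (f := Arrow.mk (l.app f)) (g := Arrow.mk (l.app g))
        (u := sq.left) (v := E.map sq) (l.naturality sq))
  π_natural : ∀ {f g : Arrow C} (sq : f ⟶ g),
    E.map (Arrow.homMk (f := Arrow.mk (r.app f)) (g := Arrow.mk (r.app g))
        (u := E.map sq) (v := sq.right) (r.naturality sq)) ≫ π g =
      π f ≫ E.map sq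
  eq1 : ∀ f : Arrow C, σ f ≫ r.app (Arrow.mk (l.app f)) = 𝟙 (E.obj f)
  eq2 : ∀ f : Arrow C, l.app (Arrow.mk (r.app f)) ≫ π f = 𝟙 (E.obj f)
  eq3 : ∀ f : Arrow C,
    σ f ≫ E.map (Arrow.homMk (f := Arrow.mk (l.app f)) (g := f) (u := 𝟙 f.left)
      (v := r.app f) ((Category.id_comp f.hom).trans (fact f).symm)) = 𝟙 (E.obj f)
  eq4 : ∀ f : Arrow C,
    E.map (Arrow.homMk (f := f) (g := Arrow.mk (r.app f)) (u := l.app f)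
      (v := 𝟙 f.right) ((fact f).trans (Category.comp_id f.hom).symm)) ≫ π f = 𝟙 (E.obj f)
  eq5 : ∀ f : Arrow C,
    σ f ≫ E.map (Arrow.homMk (f := Arrow.mk (l.app f))
        (g := Arrow.mk (l.app (Arrow.mk (l.app f)))) (u := 𝟙 f.left) (v := σ f)
        ((Category.id_comp _).trans (σ_l f).symm)) =
      σ f ≫ σ (Arrow.mk (l.app f))
  eq6 : ∀ f : Arrow C,
    E.map (Arrow.homMk (f := Arrow.mk (r.app (Arrow.mk (r.app f))))
        (g := Arrow.mk (r.app f)) (u := π f) (v := 𝟙 f.right)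
        ((π_r f).trans (Category.comp_id _).symm)) ≫ π f =
      π (Arrow.mk (r.app f)) ≫ π f
  distrib : ∀ f : Arrow C,
    π f ≫ σ f =
      σ (Arrow.mk (r.app f)) ≫
        E.map (Arrow.homMk (f := Arrow.mk (l.app (Arrow.mk (r.app f))))
            (g := Arrow.mk (r.app (Arrow.mk (l.app f)))) (u := σ f) (v := π f)
            ((eq1 f).trans (eq2 f).symm)) ≫
          π (Arrow.mk (l.app f))

variable {C : Type u} [Category.{v} C]

/-- An `L`-coalgebra structure on an arrow `f` for (the comonad part of) a natural weak
factorisation system: `s : cod f ⟶ Ef` with `s ∘ f = λ_f`, `ρ_f ∘ s = id` and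
`σ_f ∘ s = E(1, s) ∘ s`. -/
structure IsLCoalg (N : ReducedNWFS C) (f : Arrow C) (s : f.right ⟶ N.E.obj f) : Prop where
  straight : f.hom ≫ s = N.l.app f
  counit : s ≫ N.r.app f = 𝟙 f.right
  comul : s ≫ N.σ f =
    s ≫ N.E.map (Arrow.homMk (f := f) (g := Arrow.mk (N.l.app f)) (u := 𝟙 f.left)
      (v := s) ((Category.id_comp _).trans straight.symm))

/-- The composite coalgebra structure `u = π_{gf} ∘ E(E(1, g), 1) ∘ E(s, 1) ∘ t` on `g ∘ f`
built from `L`-coalgebra structures `s` on `f` and `t` on `g`. -/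
def compCoalg (N : ReducedNWFS C) {X Y Z : C} (f : X ⟶ Y) (g : Y ⟶ Z)
    (s : Y ⟶ N.E.obj (Arrow.mk f)) (t : Z ⟶ N.E.obj (Arrow.mk g))
    (hs : s ≫ N.r.app (Arrow.mk f) = 𝟙 Y) : Z ⟶ N.E.obj (Arrow.mk (f ≫ g)) :=
  t ≫
    N.E.map (Arrow.homMk (f := Arrow.mk g) (g := Arrow.mk (N.r.app (Arrow.mk f) ≫ g))
      (u := s) (v := 𝟙 Z) (by simp only [Arrow.mk_hom]; exact ((Category.assoc _ _ _).symm.trans ((congrArg (· ≫ g) hs).trans (Category.id_comp g))).trans (Category.comp_id g).symm)) ≫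
    N.E.map (Arrow.homMk (f := Arrow.mk (N.r.app (Arrow.mk f) ≫ g))
      (g := Arrow.mk (N.r.app (Arrow.mk (f ≫ g))))
      (u := N.E.map (Arrow.homMk (f := Arrow.mk f) (g := Arrow.mk (f ≫ g))
        (u := 𝟙 X) (v := g) (by simp)))
      (v := 𝟙 Z) (by exact (N.r.naturality (Arrow.homMk (f := Arrow.mk f)
        (g := Arrow.mk (f ≫ g)) (u := 𝟙 X) (v := g) (by simp))).trans (Category.comp_id _).symm)) ≫
    N.π (Arrow.mk (f ≫ g))

namespace ReducedNWFS

variable (N : ReducedNWFS C)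

theorem l_app_comp_E_map_comp_π {a b : Arrow C} (sq : a ⟶ Arrow.mk (N.r.app b)) :
    N.l.app a ≫ N.E.map sq ≫ N.π b = sq.left :=
  (N.l.naturality_assoc sq (N.π b)).symm.trans ((sq.left ≫= N.eq2 b).trans (Category.comp_id _))

end ReducedNWFS

/-- for `L`-coalgebras `(f, s)` and `(g, t)` of a natural weak factorisation
system and their composite `(gf, u)`, the square `(1_X, g) : f → gf` is a morphism of
`L`-coalgebras `(f, s) → (gf, u)`, i.e. `u ∘ g = E(1_X, g) ∘ s`. -/
theorem stmt18 (N : ReducedNWFS C) {X Y Z : C} (f : X ⟶ Y) (g : Y ⟶ Z)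
    (s : Y ⟶ N.E.obj (Arrow.mk f)) (t : Z ⟶ N.E.obj (Arrow.mk g))
    (hs : IsLCoalg N (Arrow.mk f) s) (ht : IsLCoalg N (Arrow.mk g) t) :
    g ≫ compCoalg N f g s t hs.counit =
      s ≫ N.E.map (Arrow.homMk (f := Arrow.mk f) (g := Arrow.mk (f ≫ g))
        (u := 𝟙 X) (v := g) (by simp)) := by
  have hgt : g ≫ t = N.l.app (Arrow.mk g) := ht.straight
  -- the two `E.map`s merge into one square `g ⟶ R(gf)` whose left component is `E(1, g) ∘ s`
  rw [compCoalg, ← Category.assoc g t, hgt, ← N.E.map_comp_assoc]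
  exact N.l_app_comp_E_map_comp_π _
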